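/- Let A ∈ B_H with ‖A‖ < 1. For all T, S ∈ B_H with ‖T‖ ≤ 1 and ‖S‖ ≤ 1, the following identity holds: T − S = (1 − TA†) η_A^{−1} ( ζ_A(T) − ζ_A(S) ) η_{A†}^{−1} (1 − A†S). -/

import Mathlib

/-!
Common setup: a complex Hilbert space `H`, the algebra `B_H = H →L[ℂ] H` of bounded
operators (whose `star` is the adjoint), `η_A = (1 − AA†)^{1/2}`, and the operator
Möbius transformations `ζ_A(T) = η_A (1 − TA†)⁻¹ (T − A) η_{A†}⁻¹` and
`ζ̃_A(T) = η_A⁻¹ (T + A)(1 + A†T)⁻¹ η_{A†}`.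
-/

noncomputable section

variable {H : Type*} [NormedAddCommGroup H] [InnerProductSpace ℂ H] [CompleteSpace H]

/-- `η_A = (1 − A A†)^{1/2}`; note `η_{A†} = eta (star A) = (1 − A†A)^{1/2}`. -/
def eta (A : H →L[ℂ] H) : H →L[ℂ] H := CFC.sqrt (1 - A * star A)

/-- The operator Möbius transformation `ζ_A(T) = η_A ϖ_A(T)⁻¹ (T − A) η_{A†}⁻¹`,
where `ϖ_A(T) = 1 − TA†`. -/
def zetaMob (A T : H →L[ℂ] H) : H →L[ℂ] H :=
  eta A * Ring.inverse (1 - T * star A) * (T - A) * Ring.inverse (eta (star A))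

/-- The operator Möbius transformation `ζ̃_A(T) = η_A⁻¹ (T + A) ϖ̃_A(T)⁻¹ η_{A†}`,
where `ϖ̃_A(T) = 1 + A†T`. -/
def zetaMobTilde (A T : H →L[ℂ] H) : H →L[ℂ] H :=
  Ring.inverse (eta A) * (T + A) * Ring.inverse (1 + star A * T) * eta (star A)

/-!
Write `a = A†`. Since `1 − Ta = (1 − Sa) − (T − S)a` and `a(1 − Sa)⁻¹ = (1 − aS)⁻¹a`, the difference
`(1 − Ta)((1 − Ta)⁻¹(T − A) − (1 − Sa)⁻¹(S − A))` equals `(T − S)(1 − aS)⁻¹(1 − aA)`; the outer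
factors `η_A` of `ζ_A` cancel against `η_A⁻¹`, and `η_{A†}⁻¹ η_{A†}⁻¹ = (1 − aA)⁻¹` cancels against `1 − aA`.
-/

namespace Ring

variable {R : Type*} [Ring R]

theorem mul_inverse_one_sub_mul {a b : R} (hab : IsUnit (1 - a * b)) (hba : IsUnit (1 - b * a)) :
    a * inverse (1 - b * a) = inverse (1 - a * b) * a := by
  rw [eq_comm, inverse_mul_eq_iff_eq_mul _ _ _ hab, ← mul_assoc,
    show (1 - a * b) * a = a * (1 - b * a) by noncomm_ring, mul_inverse_cancel_right _ _ hba]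

theorem one_sub_mul_mul_inverse_sub_inverse {a A T S : R} (hT : IsUnit (1 - T * a))
    (hS : IsUnit (1 - S * a)) (hS' : IsUnit (1 - a * S)) :
    (1 - T * a) * (inverse (1 - T * a) * (T - A) - inverse (1 - S * a) * (S - A)) =
      (T - S) * inverse (1 - a * S) * (1 - a * A) := by
  have hTS : 1 - T * a = (1 - S * a) - (T - S) * a := by noncomm_ring
  calc (1 - T * a) * (inverse (1 - T * a) * (T - A) - inverse (1 - S * a) * (S - A))
      = (1 - T * a) * inverse (1 - T * a) * (T - A) -
          ((1 - S * a) * inverse (1 - S * a) - (T - S) * (a * inverse (1 - S * a))) *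
            (S - A) := by
        nth_rewrite 2 [hTS]; noncomm_ring
    _ = (T - S) * (1 + inverse (1 - a * S) * (a * (S - A))) := by
        rw [mul_inverse_cancel _ hT, mul_inverse_cancel _ hS, mul_inverse_one_sub_mul hS' hS]
        noncomm_ring
    _ = (T - S) * (inverse (1 - a * S) * (1 - a * S) + inverse (1 - a * S) * (a * (S - A))) := by
        rw [inverse_mul_cancel _ hS']
    _ = (T - S) * inverse (1 - a * S) * (1 - a * A) := by noncomm_ring

end Ring

theorem isUnit_one_sub_mul_of_norm_mul_lt_one {R : Type*} [NormedRing R]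
    [HasSummableGeomSeries R] {x y : R} (h : ‖x‖ * ‖y‖ < 1) : IsUnit (1 - x * y) :=
  isUnit_one_sub_of_norm_lt_one ((norm_mul_le x y).trans_lt h)

theorem one_sub_mul_star_nonneg {A : H →L[ℂ] H} (hA : ‖A‖ ≤ 1) : 0 ≤ 1 - A * star A := by
  have hAA : 0 ≤ A * star A := mul_star_self_nonneg A
  rw [sub_nonneg, ← CStarAlgebra.norm_le_one_iff_of_nonneg _ hAA, CStarRing.norm_self_mul_star]
  exact mul_le_one₀ hA (norm_nonneg A) hA

theorem eta_mul_self {A : H →L[ℂ] H} (hA : ‖A‖ ≤ 1) : eta A * eta A = 1 - A * star A :=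
  CFC.sqrt_mul_sqrt_self _ (one_sub_mul_star_nonneg hA)

theorem isUnit_eta {A : H →L[ℂ] H} (hA : ‖A‖ < 1) : IsUnit (eta A) := by
  refine (CFC.isUnit_sqrt_iff _ (one_sub_mul_star_nonneg hA.le)).mpr
    (isUnit_one_sub_mul_of_norm_mul_lt_one ?_)
  rw [norm_star]
  exact mul_lt_one_of_nonneg_of_lt_one_left (norm_nonneg A) hA hA.le

theorem inverse_eta_star_mul_self {A : H →L[ℂ] H} (hA : ‖A‖ ≤ 1) :
    Ring.inverse (eta (star A)) * Ring.inverse (eta (star A)) = Ring.inverse (1 - star A * A) := by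
  rw [← Ring.mul_inverse_rev' (Commute.refl _), eta_mul_self (by rwa [norm_star]), star_star]

theorem zetaMob_sub_zetaMob (A T S : H →L[ℂ] H) :
    zetaMob A T - zetaMob A S = eta A *
      (Ring.inverse (1 - T * star A) * (T - A) - Ring.inverse (1 - S * star A) * (S - A)) *
        Ring.inverse (eta (star A)) := by
  simp only [zetaMob, mul_sub, sub_mul, mul_assoc]

/-- for contractions `T, S`,
`T − S = (1 − TA†) η_A⁻¹ (ζ_A(T) − ζ_A(S)) η_{A†}⁻¹ (1 − A†S)`. -/
theorem sub_eq_conj_zetaMob_sub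
    (A : H →L[ℂ] H) (hA : ‖A‖ < 1) (T S : H →L[ℂ] H) (hT : ‖T‖ ≤ 1) (hS : ‖S‖ ≤ 1) :
    T - S = (1 - T * star A) * Ring.inverse (eta A) * (zetaMob A T - zetaMob A S) *
      Ring.inverse (eta (star A)) * (1 - star A * S) := by
  have hA' : ‖star A‖ < 1 := by rwa [norm_star]
  have hcontr (X : H →L[ℂ] H) (hX : ‖X‖ ≤ 1) : ‖X‖ * ‖star A‖ < 1 :=
    mul_lt_one_of_nonneg_of_lt_one_right hX (norm_nonneg _) hA'
  have hTA : IsUnit (1 - T * star A) := isUnit_one_sub_mul_of_norm_mul_lt_one (hcontr T hT)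
  have hSA : IsUnit (1 - S * star A) := isUnit_one_sub_mul_of_norm_mul_lt_one (hcontr S hS)
  have hAS : IsUnit (1 - star A * S) :=
    isUnit_one_sub_mul_of_norm_mul_lt_one (by rw [mul_comm]; exact hcontr S hS)
  have hAA : IsUnit (1 - star A * A) :=
    isUnit_one_sub_mul_of_norm_mul_lt_one (by rw [mul_comm]; exact hcontr A hA.le)
  rw [zetaMob_sub_zetaMob]
  calc T - S
      = (T - S) * Ring.inverse (1 - star A * S) * (1 - star A * A) *
          Ring.inverse (1 - star A * A) * (1 - star A * S) := by
        rw [Ring.mul_inverse_cancel_right _ _ hAA, Ring.inverse_mul_cancel_right _ _ hAS]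
    _ = (1 - T * star A) *
          (Ring.inverse (1 - T * star A) * (T - A) - Ring.inverse (1 - S * star A) * (S - A)) *
          (Ring.inverse (eta (star A)) * Ring.inverse (eta (star A))) * (1 - star A * S) := by
        rw [Ring.one_sub_mul_mul_inverse_sub_inverse hTA hSA hAS, inverse_eta_star_mul_self hA.le]
    _ = _ := by simp only [mul_assoc, Ring.inverse_mul_cancel_left _ _ (isUnit_eta hA)]
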